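/- arXiv:2504.20549 — 3 statements merged into one kernel-verified Lean document; each statement's English description precedes it below -/
import Mathlib

section
/- For every ε ∈ ℂ, every strictly upper triangular n×n matrix X over ℂ[z], and every b ∈ {0, 1, …, n−1}, one has sh_{b+1}(X)·ψ_b(ε) = ψ_b(ε)·sh_b(X), where sh_n is read as sh_0 = identity. Consequently, the map sending X to the tuple (sh_b(X))_{b∈ℤ/nℤ} is an injective Lie algebra homomorphism from the strictly upper triangular matrices over ℂ[z] into ⨁_{b∈ℤ/nℤ} gl_n(ℂ[z]) whose image consists of tuples satisfying the intertwining relations A_{b+1}·ψ_b(ε) = ψ_b(ε)·A_b for all b. -/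
/-!
`sh_b` is the Hadamard product with the weight `w_b(i,j) = z+ε` for `i < b ≤ j` (0-based) and
`w_b(i,j) = 1` otherwise. Along a path `i ≤ k ≤ j` the cut at `b` is crossed at most once, so
`w_b(i,k) w_b(k,j) = w_b(i,j)`, which makes `sh_b` multiplicative on upper triangular matrices.
Moving the cut from `b` to `b+1` changes the weight exactly by the factor `ψ_b(j)/ψ_b(i)`, which is
the intertwining relation read entrywise. Injectivity holds because `sh_0` is the identity.
-/

/-- The map `sh_b(ε)` on `n×n` matrices over `ℂ[z]`: it multiplies the `(i,j)` entry by
`z+ε` whenever (in 1-based indices) `i ≤ b < j`, i.e. in 0-based indices `i < b ∧ b ≤ j`,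
and leaves the other entries unchanged.  For `b = 0` no entry satisfies the condition,
so `sh_0` is the identity; in particular `sh_{b+1}` for `b = n-1` (i.e. `sh_n` read as
`sh_0` via the `Fin n` wraparound) is the identity. -/
noncomputable def sh (n : ℕ) (ε : ℂ) (b : Fin n)
    (X : Matrix (Fin n) (Fin n) (Polynomial ℂ)) : Matrix (Fin n) (Fin n) (Polynomial ℂ) :=
  fun i j => if i.val < b.val ∧ b.val ≤ j.val
    then (Polynomial.X + Polynomial.C ε) * X i j else X i j

/-- The diagonal matrix `ψ_b(ε)` over `ℂ[z]` whose `(b+1,b+1)` entry (1-based), i.e.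
`(b,b)` entry (0-based), is `z+ε` and whose other diagonal entries are `1`. -/
noncomputable def psiP (n : ℕ) (ε : ℂ) (b : Fin n) : Matrix (Fin n) (Fin n) (Polynomial ℂ) :=
  Matrix.diagonal (fun i => if i = b then Polynomial.X + Polynomial.C ε else 1)

/-- A matrix is strictly upper triangular if all entries `(i,j)` with `i ≥ j` vanish. -/
def StrictUpper {n : ℕ} (X : Matrix (Fin n) (Fin n) (Polynomial ℂ)) : Prop :=
  ∀ i j : Fin n, j ≤ i → X i j = 0

open Polynomial Matrix

theorem Fin.val_add_one_eq_ite {n : ℕ} [NeZero n] (b : Fin n) :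
    ((b + 1 : Fin n) : ℕ) = if (b : ℕ) + 1 = n then (0 : ℕ) else (b : ℕ) + 1 := by
  rw [Fin.val_add, Fin.val_one', Nat.add_mod_mod]
  split_ifs with h
  · rw [h, Nat.mod_self]
  · exact Nat.mod_eq_of_lt (by omega)

section UpperTriangular

variable {ι R : Type*} [LinearOrder ι] [Fintype ι] [CommSemiring R]

theorem Matrix.hadamard_mul_hadamard_of_isUpperTriangular {W X Y : Matrix ι ι R}
    (hW : ∀ i k j, i ≤ k → k ≤ j → W i k * W k j = W i j)
    (hX : X.IsUpperTriangular) (hY : Y.IsUpperTriangular) :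
    (W ⊙ X) * (W ⊙ Y) = W ⊙ (X * Y) := by
  ext i j
  simp only [hadamard_apply, mul_apply, Finset.mul_sum]
  refine Finset.sum_congr rfl fun k _ => ?_
  rcases lt_or_ge k i with hki | hik
  · simp [hX hki]
  rcases lt_or_ge j k with hjk | hkj
  · simp [hY hjk]
  rw [← hW i k j hik hkj]
  ring

theorem Matrix.hadamard_mul_diagonal_of_isUpperTriangular [DecidableEq ι]
    {W W' X : Matrix ι ι R} {d : ι → R}
    (hW : ∀ i j, i ≤ j → W' i j * d j = d i * W i j) (hX : X.IsUpperTriangular) :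
    (W' ⊙ X) * diagonal d = diagonal d * (W ⊙ X) := by
  ext i j
  simp only [mul_diagonal, diagonal_mul, hadamard_apply]
  rcases lt_or_ge j i with hji | hij
  · simp [hX hji]
  rw [mul_right_comm, hW i j hij, mul_assoc]

end UpperTriangular

theorem Matrix.hadamard_sub {ι κ α : Type*} [NonUnitalNonAssocRing α] (A B C : Matrix ι κ α) :
    A ⊙ (B - C) = A ⊙ B - A ⊙ C := by
  ext i j
  exact mul_sub _ _ _

theorem StrictUpper.isUpperTriangular {n : ℕ} {X : Matrix (Fin n) (Fin n) ℂ[X]}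
    (hX : StrictUpper X) : X.IsUpperTriangular :=
  fun i j hji => hX i j hji.le

section Shift

variable {n : ℕ} (ε : ℂ)

noncomputable def shWeight (b : Fin n) : Matrix (Fin n) (Fin n) ℂ[X] :=
  of fun i j => if (i : ℕ) < b ∧ (b : ℕ) ≤ j then X + C ε else 1

theorem sh_eq_hadamard (b : Fin n) (M : Matrix (Fin n) (Fin n) ℂ[X]) :
    sh n ε b M = shWeight ε b ⊙ M := by
  ext i j
  simp only [sh, shWeight, hadamard_apply, of_apply]
  split_ifs <;> simp

theorem sh_zero [NeZero n] (M : Matrix (Fin n) (Fin n) ℂ[X]) : sh n ε 0 M = M := by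
  ext i j
  simp [sh]

theorem shWeight_mul_shWeight (b : Fin n) {i k j : Fin n} (hik : i ≤ k) (hkj : k ≤ j) :
    shWeight ε b i k * shWeight ε b k j = shWeight ε b i j := by
  have hik : (i : ℕ) ≤ k := hik
  have hkj : (k : ℕ) ≤ j := hkj
  simp only [shWeight, of_apply]
  split_ifs <;> first | omega | ring

theorem shWeight_succ_mul_psiP [NeZero n] (b : Fin n) {i j : Fin n} (hij : i ≤ j) :
    shWeight ε (b + 1) i j * (if j = b then X + C ε else 1) =
      (if i = b then X + C ε else 1) * shWeight ε b i j := by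
  have hij : (i : ℕ) ≤ j := hij
  have hb := b.isLt
  simp only [shWeight, of_apply, Fin.val_add_one_eq_ite, Fin.ext_iff]
  split_ifs <;> first | omega | ring

theorem sh_mul (b : Fin n) {M N : Matrix (Fin n) (Fin n) ℂ[X]}
    (hM : M.IsUpperTriangular) (hN : N.IsUpperTriangular) :
    sh n ε b (M * N) = sh n ε b M * sh n ε b N := by
  simp only [sh_eq_hadamard]
  exact (hadamard_mul_hadamard_of_isUpperTriangular
    (fun _ _ _ => shWeight_mul_shWeight ε b) hM hN).symm

theorem sh_succ_mul_psiP [NeZero n] (b : Fin n) {M : Matrix (Fin n) (Fin n) ℂ[X]}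
    (hM : M.IsUpperTriangular) :
    sh n ε (b + 1) M * psiP n ε b = psiP n ε b * sh n ε b M := by
  simp only [sh_eq_hadamard, psiP]
  exact hadamard_mul_diagonal_of_isUpperTriangular
    (fun _ _ => shWeight_succ_mul_psiP ε b) hM

end Shift

theorem statement5_general (n : ℕ) [NeZero n] (ε : ℂ) :
    (∀ X : Matrix (Fin n) (Fin n) (Polynomial ℂ), StrictUpper X → ∀ b : Fin n,
      sh n ε (b + 1) X * psiP n ε b = psiP n ε b * sh n ε b X) ∧
    (∀ X Y : Matrix (Fin n) (Fin n) (Polynomial ℂ), StrictUpper X → StrictUpper Y →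
      (∀ b : Fin n, sh n ε b X = sh n ε b Y) → X = Y) ∧
    (∀ X Y : Matrix (Fin n) (Fin n) (Polynomial ℂ), StrictUpper X → StrictUpper Y →
      ∀ b : Fin n, sh n ε b (X + Y) = sh n ε b X + sh n ε b Y) ∧
    (∀ (c : ℂ) (X : Matrix (Fin n) (Fin n) (Polynomial ℂ)), StrictUpper X →
      ∀ b : Fin n, sh n ε b (c • X) = c • sh n ε b X) ∧
    (∀ X Y : Matrix (Fin n) (Fin n) (Polynomial ℂ), StrictUpper X → StrictUpper Y →
      ∀ b : Fin n,
        sh n ε b (X * Y - Y * X) = sh n ε b X * sh n ε b Y - sh n ε b Y * sh n ε b X) := by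
  refine ⟨fun X hX b => sh_succ_mul_psiP ε b hX.isUpperTriangular, ?_, ?_, ?_, ?_⟩
  · intro X Y _ _ h
    simpa only [sh_zero] using h 0
  · intro X Y _ _ b
    simp only [sh_eq_hadamard, hadamard_add]
  · intro c X _ b
    simp only [sh_eq_hadamard, hadamard_smul]
  · intro X Y hX hY b
    rw [← sh_mul ε b hX.isUpperTriangular hY.isUpperTriangular,
      ← sh_mul ε b hY.isUpperTriangular hX.isUpperTriangular]
    simp only [sh_eq_hadamard, hadamard_sub]

/-- for every strictly upper triangular `X` over `ℂ[z]` and every `b` one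
has `sh_{b+1}(X)·ψ_b(ε) = ψ_b(ε)·sh_b(X)` (with `sh_n = sh_0 = id`, realized by the
`Fin n` wraparound).  Consequently the map `X ↦ (sh_b(X))_b` is an injective Lie algebra
homomorphism (ℂ-linear, bracket preserving) from the strictly upper triangular matrices
over `ℂ[z]` into `⨁_{b ∈ ℤ/nℤ} gl_n(ℂ[z])` whose image consists of tuples satisfying
the intertwining relations `A_{b+1}·ψ_b(ε) = ψ_b(ε)·A_b` for all `b`. -/
theorem statement5 (n : ℕ) [NeZero n] (hn : 2 ≤ n) (ε : ℂ) :
    (∀ X : Matrix (Fin n) (Fin n) (Polynomial ℂ), StrictUpper X → ∀ b : Fin n,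
      sh n ε (b + 1) X * psiP n ε b = psiP n ε b * sh n ε b X) ∧
    (∀ X Y : Matrix (Fin n) (Fin n) (Polynomial ℂ), StrictUpper X → StrictUpper Y →
      (∀ b : Fin n, sh n ε b X = sh n ε b Y) → X = Y) ∧
    (∀ X Y : Matrix (Fin n) (Fin n) (Polynomial ℂ), StrictUpper X → StrictUpper Y →
      ∀ b : Fin n, sh n ε b (X + Y) = sh n ε b X + sh n ε b Y) ∧
    (∀ (c : ℂ) (X : Matrix (Fin n) (Fin n) (Polynomial ℂ)), StrictUpper X →
      ∀ b : Fin n, sh n ε b (c • X) = c • sh n ε b X) ∧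
    (∀ X Y : Matrix (Fin n) (Fin n) (Polynomial ℂ), StrictUpper X → StrictUpper Y →
      ∀ b : Fin n,
        sh n ε b (X * Y - Y * X) = sh n ε b X * sh n ε b Y - sh n ε b Y * sh n ε b X) :=
  statement5_general n ε
end

section
/- For every ε ∈ ℂ, C(ε) is a Lie subalgebra of ⨁_{b∈ℤ/nℤ} gl_n(ℂ), and its dimension as a complex vector space is n². -/
/-! The endomorphisms of `M(ε)` are closed under composition, so they form an associative
subalgebra and a fortiori a Lie subalgebra. For the dimension, the defining relation decouples
entry by entry: for fixed `(i, j)` the sequence `a_b = (A_b)_{ij}` satisfies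
`a_{b+1} = a_b` except at `b = i` (where it gains a factor `ε`) and at `b = j` (where it loses
one). Hence `a` is determined by its value at `b = j + 1`, and conversely every value there
extends around the cycle, as `a_b = ε^[i ∈ [j+1, b)] a_{j+1}`: going once around, the factor
gained at `i` and the one lost at `j` cancel. Thus reading off `(A_{j+1})_{ij}` is an
isomorphism `C(ε) ≃ gl_n(ℂ)`. -/

/-- The diagonal matrix `D_b(ε)` over `ℂ` whose `(b+1,b+1)` entry (1-based), i.e. `(b,b)`
entry (0-based), is `ε` and whose other diagonal entries are `1`. -/
def Dmat (n : ℕ) (ε : ℂ) (b : Fin n) : Matrix (Fin n) (Fin n) ℂ :=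
  Matrix.diagonal (fun i => if i = b then ε else 1)

/-- `C(ε)`: tuples `(A_b)_{b ∈ ℤ/nℤ}` of complex `n×n` matrices with
`A_{b+1} D_b(ε) = D_b(ε) A_b` for all `b`. -/
def Cset (n : ℕ) [NeZero n] (ε : ℂ) : Set (Fin n → Matrix (Fin n) (Fin n) ℂ) :=
  {A | ∀ b : Fin n, A (b + 1) * Dmat n ε b = Dmat n ε b * A b}

def intertwiners {ι : Type*} (R : Type*) {A : Type*} [CommSemiring R] [Semiring A]
    [Algebra R A] (σ : ι → ι) (D : ι → A) : Subalgebra R (ι → A) where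
  carrier := {f | ∀ b, f (σ b) * D b = D b * f b}
  mul_mem' hf hg b := by
    rw [Pi.mul_apply, Pi.mul_apply, mul_assoc, hg b, ← mul_assoc, hf b, mul_assoc]
  one_mem' b := by simp
  add_mem' hf hg b := by simp [add_mul, mul_add, hf b, hg b]
  zero_mem' b := by simp
  algebraMap_mem' r b := Algebra.commutes r (D b)

namespace Fin

variable {n : ℕ} [NeZero n]

theorem cyclic_induction {P : Fin n → Prop} (j : Fin n) (base : P (j + 1))
    (step : ∀ c, c ≠ j → P c → P (c + 1)) (b : Fin n) : P b := by
  suffices ∀ d : ℕ, ∀ b : Fin n, (b - (j + 1)).val = d → P b from this _ b rfl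
  intro d
  induction d with
  | zero =>
    intro b hb
    rwa [sub_eq_zero.mp (Fin.ext hb)]
  | succ d ih =>
    intro b hb
    have hb0 : b - (j + 1) ≠ 0 := fun h => by simp [h] at hb
    rw [← sub_add_cancel b 1]
    refine step _ (fun h => hb0 (by rw [← h]; abel)) (ih _ ?_)
    rw [sub_right_comm, Fin.val_sub_one_of_ne_zero hb0, hb, Nat.add_sub_cancel]

/-- `1` if `i` lies in the cyclic interval `[a, b)`, else `0`. -/
def cyclicIcoIndicator (a b i : Fin n) : ℕ :=
  if (i - a).val < (b - a).val then 1 else 0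

@[simp]
theorem cyclicIcoIndicator_self (a i : Fin n) : cyclicIcoIndicator a a i = 0 := by
  simp [cyclicIcoIndicator]

theorem cyclicIcoIndicator_succ (a b i : Fin n) :
    cyclicIcoIndicator a (b + 1) i + (if a = b + 1 then 1 else 0)
      = (if i = b then 1 else 0) + cyclicIcoIndicator a b i := by
  rcases n with _ | _ | m
  · exact absurd rfl (NeZero.ne 0)
  · simp [Fin.fin_one_eq_zero]
  -- `fin_omega` evaluates `(1 : Fin k).val` only for `k = m + 2`
  simp only [cyclicIcoIndicator, Fin.ext_iff, ← Int.natCast_inj]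
  split_ifs <;> first | omega | fin_omega

end Fin

section

variable {n : ℕ} [NeZero n] {ε : ℂ}

theorem mem_Cset_iff {A : Fin n → Matrix (Fin n) (Fin n) ℂ} :
    A ∈ Cset n ε ↔ ∀ b i j,
      A (b + 1) i j * (if j = b then ε else 1) = (if i = b then ε else 1) * A b i j := by
  simp only [Cset, Set.mem_ofPred_eq, Dmat, Matrix.mul_diagonal, Matrix.diagonal_mul,
    ← Matrix.ext_iff]

variable (n ε)

def Csubalgebra : Subalgebra ℂ (Fin n → Matrix (Fin n) (Fin n) ℂ) :=
  intertwiners ℂ (· + 1) (Dmat n ε)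

theorem coe_Csubalgebra :
    (Csubalgebra n ε : Set (Fin n → Matrix (Fin n) (Fin n) ℂ)) = Cset n ε :=
  rfl

def seed : (Fin n → Matrix (Fin n) (Fin n) ℂ) →ₗ[ℂ] Matrix (Fin n) (Fin n) ℂ where
  toFun A := Matrix.of fun i j => A (j + 1) i j
  map_add' _ _ := rfl
  map_smul' _ _ := rfl

def propagate : Matrix (Fin n) (Fin n) ℂ →ₗ[ℂ] (Fin n → Matrix (Fin n) (Fin n) ℂ) where
  toFun M b := Matrix.of fun i j => ε ^ Fin.cyclicIcoIndicator (j + 1) b i * M i j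
  map_add' _ _ := by ext; simp [mul_add]
  map_smul' _ _ := by ext; simp [mul_left_comm]

variable {n ε}

@[simp]
theorem seed_apply (A : Fin n → Matrix (Fin n) (Fin n) ℂ) (i j : Fin n) :
    seed n A i j = A (j + 1) i j :=
  rfl

@[simp]
theorem propagate_apply (M : Matrix (Fin n) (Fin n) ℂ) (b i j : Fin n) :
    propagate n ε M b i j = ε ^ Fin.cyclicIcoIndicator (j + 1) b i * M i j :=
  rfl

@[simp]
theorem seed_propagate (M : Matrix (Fin n) (Fin n) ℂ) : seed n (propagate n ε M) = M := by
  ext i j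
  simp

theorem propagate_mem_Cset (M : Matrix (Fin n) (Fin n) ℂ) : propagate n ε M ∈ Cset n ε := by
  rw [mem_Cset_iff]
  intro b i j
  have key := Fin.cyclicIcoIndicator_succ (j + 1) b i
  simp only [add_left_inj] at key
  have ite_eq_pow (p : Prop) [Decidable p] : (if p then ε else 1) = ε ^ (if p then 1 else 0) := by
    split_ifs <;> simp
  simp only [propagate_apply, ite_eq_pow]
  rw [mul_right_comm, ← pow_add, key, pow_add, mul_assoc]

theorem eq_zero_of_seed_eq_zero {A : Fin n → Matrix (Fin n) (Fin n) ℂ} (hA : A ∈ Cset n ε)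
    (h : seed n A = 0) : A = 0 := by
  funext b
  ext i j
  refine Fin.cyclic_induction (P := fun b => A b i j = 0) j (congr($h i j)) ?_ b
  intro c hc hzero
  have hstep := mem_Cset_iff.mp hA c i j
  rw [if_neg hc.symm, mul_one] at hstep
  simp [hstep, hzero]

theorem finrank_Csubalgebra :
    Module.finrank ℂ (Subalgebra.toSubmodule (Csubalgebra n ε)) = n ^ 2 := by
  let seedEquiv :=
    LinearEquiv.ofBijective ((seed n).domRestrict (Subalgebra.toSubmodule (Csubalgebra n ε)))
      ⟨(injective_iff_map_eq_zero _).mpr fun A hA => Subtype.ext (eq_zero_of_seed_eq_zero A.2 hA),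
        fun M => ⟨⟨propagate n ε M, propagate_mem_Cset M⟩, seed_propagate M⟩⟩
  rw [seedEquiv.finrank_eq, Module.finrank_matrix, Fintype.card_fin, Module.finrank_self,
    mul_one, sq]

end

theorem statement7_general (n : ℕ) [NeZero n] (ε : ℂ) :
    ∃ S : Submodule ℂ (Fin n → Matrix (Fin n) (Fin n) ℂ),
      (S : Set (Fin n → Matrix (Fin n) (Fin n) ℂ)) = Cset n ε ∧
      (∀ A ∈ S, ∀ B ∈ S, (fun b => A b * B b - B b * A b) ∈ S) ∧
      Module.finrank ℂ S = n ^ 2 :=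
  ⟨Subalgebra.toSubmodule (Csubalgebra n ε), coe_Csubalgebra n ε,
    fun _ hA _ hB => sub_mem ((Csubalgebra n ε).mul_mem hA hB) ((Csubalgebra n ε).mul_mem hB hA),
    finrank_Csubalgebra⟩

/-- `C(ε)` is a Lie subalgebra of `⨁_{b ∈ ℤ/nℤ} gl_n(ℂ)` (with the
componentwise commutator bracket) of complex dimension `n²`. -/
theorem statement7 (n : ℕ) [NeZero n] (hn : 2 ≤ n) (ε : ℂ) :
    ∃ S : Submodule ℂ (Fin n → Matrix (Fin n) (Fin n) ℂ),
      (S : Set (Fin n → Matrix (Fin n) (Fin n) ℂ)) = Cset n ε ∧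
      (∀ A ∈ S, ∀ B ∈ S, (fun b => A b * B b - B b * A b) ∈ S) ∧
      Module.finrank ℂ S = n ^ 2 :=
  statement7_general n ε
end

section
/- Let B = { (A_b) ∈ C(0) : every component A_b is upper triangular } and L = { (A_b) ∈ C(0) : every component A_b is strictly lower triangular }. Then B is a Lie subalgebra of C(0), the projection onto the component b = 0 restricts to a Lie algebra isomorphism from B onto the Borel subalgebra of upper triangular matrices in gl_n(ℂ), and C(0) = B ⊕ L as complex vector spaces. (Thus C(0) is isomorphic to the semidirect sum b ⋉ (n_-)^a, i.e. to the Iwahori algebra quotient I/zI.) -/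
/-- The diagonal matrix `D_b(0)` over `ℂ` whose `(b+1,b+1)` entry (1-based), i.e. `(b,b)`
entry (0-based), is `0` and whose other diagonal entries are `1`. -/
def Dmat0 (n : ℕ) (b : Fin n) : Matrix (Fin n) (Fin n) ℂ :=
  Matrix.diagonal (fun i => if i = b then 0 else 1)

/-- `C(0)`: tuples `(A_b)_{b ∈ ℤ/nℤ}` of complex `n×n` matrices with
`A_{b+1} D_b(0) = D_b(0) A_b` for all `b`. -/
def Cset0 (n : ℕ) [NeZero n] : Set (Fin n → Matrix (Fin n) (Fin n) ℂ) :=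
  {A | ∀ b : Fin n, A (b + 1) * Dmat0 n b = Dmat0 n b * A b}

/-- `B`: tuples in `C(0)` all of whose components are upper triangular
(entries `(i,j)` with `i > j` vanish). -/
def Bset (n : ℕ) [NeZero n] : Set (Fin n → Matrix (Fin n) (Fin n) ℂ) :=
  {A | A ∈ Cset0 n ∧ ∀ (b : Fin n) (i j : Fin n), j < i → A b i j = 0}

/-- `L`: tuples in `C(0)` all of whose components are strictly lower triangular
(entries `(i,j)` with `i ≤ j` vanish). -/
def Lset (n : ℕ) [NeZero n] : Set (Fin n → Matrix (Fin n) (Fin n) ℂ) :=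
  {A | A ∈ Cset0 n ∧ ∀ (b : Fin n) (i j : Fin n), i ≤ j → A b i j = 0}

/-- The Borel subalgebra of upper triangular matrices in `gl_n(ℂ)`. -/
def BorelSet (n : ℕ) : Set (Matrix (Fin n) (Fin n) ℂ) :=
  {X | ∀ i j : Fin n, j < i → X i j = 0}


/-!
Each `D_b(0)` is diagonal, so the relation `A_{b+1} D_b(0) = D_b(0) A_b` is entrywise: the entry
`(i, j)` passes unchanged from `A_b` to `A_{b+1}` unless `b ∈ {i, j}`, and off the diagonal the
`i`-th row of `A_{i+1}` vanishes. Being entrywise, the relation survives taking upper triangular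
parts, which splits `C(0) = B ⊕ L`. Following an entry `(i, j)` with `i ≤ j` around the cycle
starting at `b = 0` shows that an element of `B` is determined by `A_0`, and the same recipe lifts
every upper triangular matrix. Finally `B` is the intersection of two associative subalgebras, so
it is closed under commutators.
-/

def twistedCentralizer (R : Type*) {ι A : Type*} [CommSemiring R] [Semiring A] [Algebra R A]
    (σ : ι → ι) (D : ι → A) : Subalgebra R (ι → A) where
  carrier := {X | ∀ b, X (σ b) * D b = D b * X b}
  mul_mem' {X Y} hX hY b := by
    simp only [Pi.mul_apply]
    rw [mul_assoc, hY b, ← mul_assoc, hX b, mul_assoc]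
  add_mem' hX hY b := by simp only [Pi.add_apply, add_mul, mul_add, hX b, hY b]
  algebraMap_mem' r b := Algebra.commutes r (D b)

theorem Fin.apply_eq_of_forall_apply_add_one_eq {α : Type*} {n : ℕ} {f : Fin (n + 1) → α}
    {b c : Fin (n + 1)} (hbc : b ≤ c) (h : ∀ d, b ≤ d → d < c → f (d + 1) = f d) :
    f c = f b := by
  induction c using Fin.induction with
  | zero => rw [Fin.le_zero_iff.mp hbc]
  | succ c ih =>
    rcases hbc.eq_or_lt with rfl | hlt
    · rfl
    · have hb : b ≤ c.castSucc := Fin.le_castSucc_iff.mpr hlt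
      rw [← Fin.coeSucc_eq_succ, h _ hb Fin.castSucc_lt_succ,
        ih hb fun d h₁ h₂ => h d h₁ (h₂.trans Fin.castSucc_lt_succ)]

namespace Matrix

variable {m R : Type*} [LinearOrder m]

def triu [Zero R] (M : Matrix m m R) : Matrix m m R :=
  of fun i j => if i ≤ j then M i j else 0

theorem isUpperTriangular_triu [Zero R] (M : Matrix m m R) : (triu M).IsUpperTriangular :=
  fun _ _ hji => if_neg (not_le.mpr hji)

theorem triu_add_eq [AddZeroClass R] {P Q : Matrix m m R} (hP : P.IsUpperTriangular)
    (hQ : ∀ i j, i ≤ j → Q i j = 0) : triu (P + Q) = P := by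
  ext i j
  by_cases hij : i ≤ j
  · simp [triu, hij, hQ i j hij]
  · simp [triu, hij, hP (not_le.mp hij)]

variable [Fintype m] [DecidableEq m] [NonUnitalNonAssocSemiring R]

theorem triu_mul_diagonal (M : Matrix m m R) (d : m → R) :
    triu M * diagonal d = triu (M * diagonal d) := by
  ext i j
  simp only [triu, mul_diagonal, of_apply]
  split_ifs <;> simp

theorem diagonal_mul_triu (M : Matrix m m R) (d : m → R) :
    diagonal d * triu M = triu (diagonal d * M) := by
  ext i j
  simp only [triu, diagonal_mul, of_apply]
  split_ifs <;> simp

end Matrix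

section Cset0

variable {n : ℕ} [NeZero n] {A : Fin n → Matrix (Fin n) (Fin n) ℂ}

theorem mem_Cset0_iff : A ∈ Cset0 n ↔ ∀ b i j,
    A (b + 1) i j * (if j = b then 0 else 1) = (if i = b then 0 else 1) * A b i j := by
  simp only [Cset0, Dmat0, Set.mem_ofPred_eq, ← Matrix.ext_iff, Matrix.mul_diagonal,
    Matrix.diagonal_mul]

theorem Cset0_apply_add_one_of_ne (hA : A ∈ Cset0 n) {b i j : Fin n} (hi : b ≠ i) (hj : b ≠ j) :
    A (b + 1) i j = A b i j := by
  simpa [hi.symm, hj.symm] using mem_Cset0_iff.mp hA b i j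

theorem Cset0_apply_add_one_self_eq_zero (hA : A ∈ Cset0 n) {i j : Fin n} (hij : i ≠ j) :
    A (i + 1) i j = 0 := by
  simpa [hij.symm] using mem_Cset0_iff.mp hA i i j

theorem triu_mem_Cset0 (hA : A ∈ Cset0 n) : (fun b => (A b).triu) ∈ Cset0 n := fun b => by
  change _ * Matrix.diagonal _ = Matrix.diagonal _ * _
  rw [Matrix.triu_mul_diagonal, Matrix.diagonal_mul_triu]
  exact congrArg Matrix.triu (hA b)

theorem existsUnique_mem_Bset_add_mem_Lset (hA : A ∈ Cset0 n) :
    ∃! p : (Fin n → Matrix (Fin n) (Fin n) ℂ) × (Fin n → Matrix (Fin n) (Fin n) ℂ),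
      p.1 ∈ Bset n ∧ p.2 ∈ Lset n ∧ A = p.1 + p.2 := by
  have hT := triu_mem_Cset0 hA
  refine ⟨((fun b => (A b).triu), A - fun b => (A b).triu),
    ⟨⟨hT, fun b => Matrix.isUpperTriangular_triu (A b)⟩, ⟨?_, fun b i j hij => ?_⟩,
      (add_sub_cancel _ _).symm⟩, ?_⟩
  · exact (twistedCentralizer ℂ (· + 1) (Dmat0 n)).sub_mem hA hT
  · simp [Matrix.triu, hij]
  · rintro ⟨P, Q⟩ ⟨⟨-, hP⟩, ⟨-, hQ⟩, rfl⟩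
    have hPQ : (fun b => (P b + Q b).triu) = P :=
      funext fun b => Matrix.triu_add_eq (fun i j => hP b i j) (hQ b)
    simp [hPQ]

end Cset0

def bSubalgebra (n : ℕ) [NeZero n] : Subalgebra ℂ (Fin n → Matrix (Fin n) (Fin n) ℂ) :=
  twistedCentralizer ℂ (· + 1) (Dmat0 n) ⊓
    Subalgebra.pi Set.univ fun _ => Matrix.blockTriangularSubalgebra ℂ ℂ id

theorem coe_bSubalgebra (n : ℕ) [NeZero n] :
    (bSubalgebra n : Set (Fin n → Matrix (Fin n) (Fin n) ℂ)) = Bset n := by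
  ext A
  exact ⟨fun ⟨hC, hT⟩ => ⟨hC, fun b i j h => hT b trivial h⟩,
    fun ⟨hC, hT⟩ => ⟨hC, fun b _ i j h => hT b i j h⟩⟩

section liftBorel

/-- Going around the cycle `b ↦ b + 1`, the defining relation of `C(0)` kills the entry `(i, j)`
at `b = i + 1` and frees it again at `b = j + 1`. -/
def liftBorel {n : ℕ} (X : Matrix (Fin n) (Fin n) ℂ) : Fin n → Matrix (Fin n) (Fin n) ℂ :=
  fun b => Matrix.of fun i j => if i ≤ j ∧ (b ≤ i ∨ j < b) then X i j else 0

theorem liftBorel_apply_zero {n : ℕ} [NeZero n] {X : Matrix (Fin n) (Fin n) ℂ}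
    (hX : X ∈ BorelSet n) : liftBorel X 0 = X := by
  ext i j
  by_cases hij : i ≤ j
  · simp [liftBorel, hij]
  · simp [liftBorel, hij, hX i j (not_le.mp hij)]

variable {m : ℕ} {A : Fin (m + 1) → Matrix (Fin (m + 1)) (Fin (m + 1)) ℂ}

theorem liftBorel_mem_Bset (X : Matrix (Fin (m + 1)) (Fin (m + 1)) ℂ) :
    liftBorel X ∈ Bset (m + 1) := by
  refine ⟨mem_Cset0_iff.mpr fun b i j => ?_, fun b i j hji => by simp [liftBorel, hji.not_ge]⟩
  simp only [liftBorel, Matrix.of_apply, Fin.le_iff_val_le_val, Fin.lt_def, Fin.ext_iff,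
    Fin.val_add_one, Fin.val_last]
  split_ifs <;> first | omega | simp

theorem Cset0_apply_eq_ite (hA : A ∈ Cset0 (m + 1)) {i j : Fin (m + 1)} (hij : i ≤ j)
    (b : Fin (m + 1)) : A b i j = if b ≤ i ∨ j < b then A 0 i j else 0 := by
  split_ifs with hb
  · rcases hb with hbi | hjb
    · exact Fin.apply_eq_of_forall_apply_add_one_eq (f := fun c => A c i j) (Fin.zero_le b)
        fun d _ hd => Cset0_apply_add_one_of_ne hA (by omega) (by omega)
    · have hlast := Fin.val_last m
      calc A b i j = A (Fin.last m) i j :=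
            (Fin.apply_eq_of_forall_apply_add_one_eq (f := fun c => A c i j) (Fin.le_last b)
              fun d hd _ => Cset0_apply_add_one_of_ne hA (by omega) (by omega)).symm
        _ = A (Fin.last m + 1) i j := (Cset0_apply_add_one_of_ne hA (by omega) (by omega)).symm
        _ = A 0 i j := by rw [Fin.last_add_one]
  · push Not at hb
    obtain ⟨hib, hbj⟩ := hb
    have hi1 : (i + 1 : Fin (m + 1)).val = i.val + 1 :=
      Fin.val_add_one_of_lt (hib.trans_le (Fin.le_last b))
    calc A b i j = A (i + 1) i j :=
          Fin.apply_eq_of_forall_apply_add_one_eq (f := fun c => A c i j) (by omega)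
            fun d hd hdb => Cset0_apply_add_one_of_ne hA (by omega) (by omega)
      _ = 0 := Cset0_apply_add_one_self_eq_zero hA (by omega)

theorem eq_liftBorel_of_mem_Bset (hA : A ∈ Bset (m + 1)) : A = liftBorel (A 0) := by
  funext b
  ext i j
  by_cases hij : i ≤ j
  · simp [liftBorel, hij, Cset0_apply_eq_ite hA.1 hij b]
  · simp [liftBorel, hij, hA.2 b i j (not_le.mp hij)]

end liftBorel

theorem statement11_general (n : ℕ) [NeZero n] :
    (∃ S : Submodule ℂ (Fin n → Matrix (Fin n) (Fin n) ℂ),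
      (S : Set (Fin n → Matrix (Fin n) (Fin n) ℂ)) = Bset n ∧
      ∀ A ∈ S, ∀ B ∈ S, (fun b => A b * B b - B b * A b) ∈ S) ∧
    Set.BijOn (fun A : Fin n → Matrix (Fin n) (Fin n) ℂ => A 0) (Bset n) (BorelSet n) ∧
    (∀ A ∈ Cset0 n,
      ∃! p : (Fin n → Matrix (Fin n) (Fin n) ℂ) × (Fin n → Matrix (Fin n) (Fin n) ℂ),
        p.1 ∈ Bset n ∧ p.2 ∈ Lset n ∧ A = p.1 + p.2) := by
  let 𝔟 := bSubalgebra n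
  refine ⟨⟨𝔟.toSubmodule, coe_bSubalgebra n,
    fun A hA B hB => 𝔟.sub_mem (𝔟.mul_mem hA hB) (𝔟.mul_mem hB hA)⟩, ?_,
    fun A hA => existsUnique_mem_Bset_add_mem_Lset hA⟩
  obtain ⟨m, rfl⟩ := Nat.exists_eq_add_one_of_ne_zero (NeZero.ne n)
  refine ⟨fun A hA => hA.2 0, fun A hA B hB hAB => ?_,
    fun X hX => ⟨liftBorel X, liftBorel_mem_Bset X, liftBorel_apply_zero hX⟩⟩
  rw [eq_liftBorel_of_mem_Bset hA, eq_liftBorel_of_mem_Bset hB]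
  exact congrArg liftBorel hAB

/-- `B` is a Lie subalgebra of `C(0)` (a ℂ-subspace closed under the
componentwise commutator bracket), the projection onto the component `b = 0` (which
automatically preserves the bracket) restricts to a bijection from `B` onto the Borel
subalgebra of upper triangular matrices in `gl_n(ℂ)`, and `C(0) = B ⊕ L` as complex
vector spaces: every element of `C(0)` is uniquely the sum of an element of `B` and an
element of `L`. -/
theorem statement11 (n : ℕ) [NeZero n] (hn : 2 ≤ n) :
    (∃ S : Submodule ℂ (Fin n → Matrix (Fin n) (Fin n) ℂ),
      (S : Set (Fin n → Matrix (Fin n) (Fin n) ℂ)) = Bset n ∧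
      ∀ A ∈ S, ∀ B ∈ S, (fun b => A b * B b - B b * A b) ∈ S) ∧
    Set.BijOn (fun A : Fin n → Matrix (Fin n) (Fin n) ℂ => A 0) (Bset n) (BorelSet n) ∧
    (∀ A ∈ Cset0 n,
      ∃! p : (Fin n → Matrix (Fin n) (Fin n) ℂ) × (Fin n → Matrix (Fin n) (Fin n) ℂ),
        p.1 ∈ Bset n ∧ p.2 ∈ Lset n ∧ A = p.1 + p.2) :=
  statement11_general n
end
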